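/- arXiv:1912.13287 — 2 statements merged into one kernel-verified Lean document; each statement's English description precedes it below -/
import Mathlib

section
/- For any realizable interval sequence S = (A,B), there exists a graphic sequence D realizing S (i.e., A ≤ D ≤ B and D is graphic) that is levelled with respect to S. -/
/-!
A levelling operation `d_α ↦ d_α - 1`, `d_β ↦ d_β + 1` with `d_β < d_α` preserves graphicity:
some neighbour `v ≠ β` of `α` is not a neighbour of `β`, and moving the edge `αv` to `βv`
realizes the new sequence. Hence a graphic sequence in `[A,B]` of minimum spread is levelled.
-/

open Finset

/-- A sequence is graphic if it is the degree sequence of a simple graph. -/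
def IsGraphic {n : ℕ} (D : Fin n → ℕ) : Prop :=
  ∃ (G : SimpleGraph (Fin n)) (_ : DecidableRel G.Adj), ∀ i, G.degree i = D i

/-- The levelling operation: decrement entry `α` by 1, increment entry `β` by 1. -/
def lvl {n : ℕ} (D : Fin n → ℕ) (α β : Fin n) : Fin n → ℕ :=
  fun i => if i = α then D α - 1 else if i = β then D β + 1 else D i

/-- The spread `φ(D) = ∑_{r<s} |d_r - d_s|`. -/
def spread {n : ℕ} (D : Fin n → ℕ) : ℤ :=
  ∑ r : Fin n, ∑ s : Fin n, if r < s then |(D r : ℤ) - (D s : ℤ)| else 0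

/-- `A ≤ D ≤ B` coordinatewise. -/
def Between {n : ℕ} (A D B : Fin n → ℕ) : Prop := ∀ i, A i ≤ D i ∧ D i ≤ B i

/-- Volume of `D` w.r.t. lower boundary `A`. -/
def vol {n : ℕ} (A D : Fin n → ℕ) : ℕ := ∑ i, (D i - A i)

/-- An interval sequence `(A,B)` is realizable if it contains a graphic sequence. -/
def Realizable {n : ℕ} (A B : Fin n → ℕ) : Prop := ∃ D, IsGraphic D ∧ Between A D B

/-- Two sequences are similar if one is a permutation of the other. -/
def SimilarSeq {n : ℕ} (D D' : Fin n → ℕ) : Prop :=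
  ∃ σ : Equiv.Perm (Fin n), ∀ i, D' i = D (σ i)

/-- `D` is levelled w.r.t. `(A,B)`: it lies in `[A,B]` and no levelling operation staying
within `[A,B]` strictly decreases its spread. -/
def IsLevelled {n : ℕ} (A B D : Fin n → ℕ) : Prop :=
  Between A D B ∧ ∀ α β : Fin n, α ≠ β → D β < D α → Between A (lvl D α β) B →
    spread D ≤ spread (lvl D α β)

/-- One levelling step from `D` to `D'` staying within `[A,B]`. -/
def LvlStep {n : ℕ} (A B D D' : Fin n → ℕ) : Prop :=
  ∃ α β : Fin n, α ≠ β ∧ D β < D α ∧ D' = lvl D α β ∧ Between A D' B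

/-- `F(ℓ,S) = ∑_i (min(ℓ,b_i) - min(ℓ,a_i))`. -/
noncomputable def Fvol {n : ℕ} (A B : Fin n → ℕ) (ℓ : ℝ) : ℝ :=
  ∑ i, (min ℓ (B i : ℝ) - min ℓ (A i : ℝ))

/-- Upper deviation `δ_U(D,S) = ∑_i max(0, d_i - b_i)` (truncated subtraction). -/
def devU {n : ℕ} (D B : Fin n → ℕ) : ℕ := ∑ i, (D i - B i)

/-- Lower deviation `δ_L(D,S) = ∑_i max(0, a_i - d_i)` (truncated subtraction). -/
def devL {n : ℕ} (D A : Fin n → ℕ) : ℕ := ∑ i, (A i - D i)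

/-- `R` lies in `[B,⊤]`, `(A,R)` is realizable, and `∑ (r_i - b_i)` is minimum. -/
def MinUpper {n : ℕ} (A B R : Fin n → ℕ) : Prop :=
  (∀ i, B i ≤ R i ∧ R i ≤ n - 1) ∧ Realizable A R ∧
  ∀ R' : Fin n → ℕ, (∀ i, B i ≤ R' i ∧ R' i ≤ n - 1) → Realizable A R' →
    ∑ i, (R i - B i) ≤ ∑ i, (R' i - B i)

namespace SimpleGraph

variable {V : Type*} [Fintype V] [DecidableEq V] (G : SimpleGraph V) [DecidableRel G.Adj]

lemma neighborFinset_edge {b v : V} (hne : b ≠ v) (x : V) :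
    (edge b v).neighborFinset x = if x = b then {v} else if x = v then {b} else ∅ := by
  ext y
  simp only [mem_neighborFinset, edge_adj]
  split_ifs <;> grind

lemma degree_sup_edge {b v : V} (hne : b ≠ v) (hn : ¬G.Adj b v) (x : V) :
    (G ⊔ edge b v).degree x = G.degree x + if x = b ∨ x = v then 1 else 0 := by
  rw [← card_neighborFinset_eq_degree, neighborFinset_sup, neighborFinset_edge hne]
  rcases eq_or_ne x b with rfl | hb
  · simp [card_insert_of_notMem, hn]
  rcases eq_or_ne x v with rfl | hv
  · simp [hb, card_insert_of_notMem, adj_comm, hn]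
  · simp [hb, hv]

lemma degree_sdiff_edge {a v : V} (h : G.Adj a v) (x : V) :
    (G \ edge a v).degree x = G.degree x - if x = a ∨ x = v then 1 else 0 := by
  rw [← card_neighborFinset_eq_degree, neighborFinset_sdiff, neighborFinset_edge (G.ne_of_adj h)]
  rcases eq_or_ne x a with rfl | ha
  · simp [card_sdiff_of_subset, h]
  rcases eq_or_ne x v with rfl | hv
  · simp [ha, card_sdiff_of_subset, h.symm]
  · simp [ha, hv]

lemma exists_adj_not_adj_of_degree_lt {a b : V} (h : G.degree b < G.degree a) :
    ∃ v, G.Adj a v ∧ v ≠ b ∧ ¬G.Adj b v := by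
  by_contra! hc
  by_cases hab : G.Adj a b
  · have hsub : (G.neighborFinset a).erase b ⊆ (G.neighborFinset b).erase a := fun v hv => by
      simp only [mem_erase, mem_neighborFinset] at hv ⊢
      exact ⟨(G.ne_of_adj hv.2).symm, hc v hv.2 hv.1⟩
    have hcard := card_le_card hsub
    rw [card_erase_of_mem (by simpa using hab), card_erase_of_mem (by simpa using hab.symm),
      card_neighborFinset_eq_degree, card_neighborFinset_eq_degree] at hcard
    have : 0 < G.degree b := G.degree_pos_iff_exists_adj b |>.mpr ⟨a, hab.symm⟩
    omega
  · have hsub : G.neighborFinset a ⊆ G.neighborFinset b := fun v hv => by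
      rw [mem_neighborFinset] at hv ⊢
      exact hc v hv (by rintro rfl; exact hab hv)
    have hcard := card_le_card hsub
    simp only [card_neighborFinset_eq_degree] at hcard
    omega

end SimpleGraph

open SimpleGraph

lemma IsGraphic.lvl {n : ℕ} {D : Fin n → ℕ} (hD : IsGraphic D) {α β : Fin n}
    (hαβ : α ≠ β) (hlt : D β < D α) : IsGraphic (lvl D α β) := by
  obtain ⟨G, _, hdeg⟩ := hD
  obtain ⟨v, hαv, hvβ, hβv⟩ := G.exists_adj_not_adj_of_degree_lt (hdeg α ▸ hdeg β ▸ hlt)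
  have hβv' : ¬(G \ edge α v).Adj β v := fun h => hβv h.1
  refine ⟨(G \ edge α v) ⊔ edge β v, inferInstance, fun x => ?_⟩
  rw [degree_sup_edge (G \ edge α v) hvβ.symm hβv', degree_sdiff_edge G hαv, _root_.lvl]
  have hpos : 0 < G.degree v := G.degree_pos_iff_exists_adj v |>.mpr ⟨α, hαv.symm⟩
  rcases eq_or_ne x α with rfl | hxα
  · simp [hαβ, G.ne_of_adj hαv, hdeg]
  rcases eq_or_ne x β with rfl | hxβ
  · simp [hxα, hvβ.symm, hdeg]
  rcases eq_or_ne x v with rfl | hxv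
  · simp [hxα, hxβ, ← hdeg]
    omega
  · simp [hxα, hxβ, hxv, hdeg]

lemma spread_nonneg {n : ℕ} (D : Fin n → ℕ) : 0 ≤ spread D :=
  sum_nonneg fun _ _ => sum_nonneg fun _ _ => by split_ifs <;> simp

theorem stmt_5_general {n : ℕ} (A B : Fin n → ℕ) (hR : Realizable A B) :
    ∃ D : Fin n → ℕ, IsGraphic D ∧ Between A D B ∧ IsLevelled A B D := by
  obtain ⟨D, ⟨hD, hDAB⟩, hmin⟩ := (measure fun D : Fin n → ℕ => (spread D).toNat).wf.has_min
    {D | IsGraphic D ∧ Between A D B} hR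
  refine ⟨D, hD, hDAB, hDAB, fun α β hαβ hlt hlvl => ?_⟩
  have hle : (spread D).toNat ≤ (spread (lvl D α β)).toNat :=
    not_lt.mp (hmin _ ⟨hD.lvl hαβ hlt, hlvl⟩)
  have := spread_nonneg D
  have := spread_nonneg (lvl D α β)
  omega

theorem stmt_5 {n : ℕ} (A B : Fin n → ℕ)
    (hS : ∀ i, A i ≤ B i ∧ B i ≤ n - 1) (hR : Realizable A B) :
    ∃ D : Fin n → ℕ, IsGraphic D ∧ Between A D B ∧ IsLevelled A B D :=
  stmt_5_general A B hR
end

section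
/- Let S = (A,B) be an interval sequence, L an integer in [0, Σ_i (b_i − a_i)], and ℓ = min{x : F(x,S) = L} where F(ℓ,S) = Σ_i (min(ℓ,b_i) − min(ℓ,a_i)). Then an integer sequence D with A ≤ D ≤ B is levelled with respect to S and has volume L if and only if: (a) d_i = b_i for every i with b_i ≤ ℓ; (b) d_i = a_i for every i with a_i ≥ ℓ; and (c) among the indices i with a_i < ℓ < b_i, exactly F(ℓ,S) − F(⌊ℓ⌋,S) of them have d_i = ⌈ℓ⌉ and the rest have d_i = ⌊ℓ⌋. -/
open Finset

/-!
Pour water into the columns `[a_i, b_i]` up to an integer level `k`: the result is the sequence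
`fill A B k i = max a_i (min k b_i)`, of volume `F(k)`. A levelling move between entries that
differ by at least two strictly lowers the spread, while one between entries that differ by one
is a transposition; hence `D` is levelled exactly when, for some integer `t`, every raisable entry
is `≥ t` and every lowerable one is `≤ t + 1`, i.e. when `fill t ≤ D ≤ fill (t + 1)`.
Such a `D` lies between `fill k` and `fill k'` whenever `F(k) ≤ vol D ≤ F(k')`: if, say, `k > t`,
then `D ≤ fill k` pointwise and the volumes force equality. Since `F` is monotone and `F(ℓ) = L`,
this applies to `k = ⌊ℓ⌋` and `k' = ⌈ℓ⌉`, and `fill ⌊ℓ⌋ ≤ D ≤ fill ⌈ℓ⌉` together with `vol D = L`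
is conditions (a)–(c) written out, `T` being the set of indices where `D` exceeds `fill ⌊ℓ⌋`.
-/

section Spread
variable {ι : Type*} [Fintype ι]

theorem sum_sum_abs_sub_comp_perm (X : ι → ℤ) (σ : Equiv.Perm ι) :
    ∑ r, ∑ s, |X (σ r) - X (σ s)| = ∑ r, ∑ s, |X r - X s| := calc
  _ = ∑ r, ∑ s, |X (σ r) - X s| :=
    Finset.sum_congr rfl fun r _ => Equiv.sum_comp σ fun s => |X (σ r) - X s|
  _ = _ := Equiv.sum_comp σ fun r => ∑ s, |X r - X s|

variable [DecidableEq ι]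

theorem sum_sum_abs_sub_eq_of_ne (X : ι → ℤ) {α β : ι} (h : α ≠ β) :
    ∑ r, ∑ s, |X r - X s| = 2 * |X α - X β| + 2 * ∑ s ∈ {α, β}ᶜ, (|X α - X s| + |X β - X s|)
      + ∑ r ∈ {α, β}ᶜ, ∑ s ∈ {α, β}ᶜ, |X r - X s| := by
  have split : ∀ f : ι → ℤ, ∑ r, f r = f α + f β + ∑ r ∈ {α, β}ᶜ, f r := fun f => by
    rw [← Finset.sum_add_sum_compl {α, β}, Finset.sum_pair h]
  have hα : ∑ r ∈ {α, β}ᶜ, |X r - X α| = ∑ s ∈ {α, β}ᶜ, |X α - X s| :=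
    Finset.sum_congr rfl fun _ _ => abs_sub_comm _ _
  have hβ : ∑ r ∈ {α, β}ᶜ, |X r - X β| = ∑ s ∈ {α, β}ᶜ, |X β - X s| :=
    Finset.sum_congr rfl fun _ _ => abs_sub_comm _ _
  simp only [split, Finset.sum_add_distrib, sub_self, abs_zero, hα, hβ, abs_sub_comm (X β) (X α)]
  ring

theorem sum_sum_abs_sub_lt {X Y : ι → ℤ} {α β : ι} (h : α ≠ β) (hα : Y α = X α - 1)
    (hβ : Y β = X β + 1) (hY : ∀ s ∈ ({α, β} : Finset ι)ᶜ, Y s = X s) (hgap : X β + 2 ≤ X α) :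
    ∑ r, ∑ s, |Y r - Y s| < ∑ r, ∑ s, |X r - X s| := by
  rw [sum_sum_abs_sub_eq_of_ne X h, sum_sum_abs_sub_eq_of_ne Y h,
    Finset.sum_congr rfl fun r hr => Finset.sum_congr rfl fun s hs => by rw [hY r hr, hY s hs]]
  have hpair : ∑ s ∈ {α, β}ᶜ, (|Y α - Y s| + |Y β - Y s|)
      ≤ ∑ s ∈ {α, β}ᶜ, (|X α - X s| + |X β - X s|) :=
    Finset.sum_le_sum fun s hs => by
      rw [hα, hβ, hY s hs]
      simp only [abs_eq_max_neg]
      omega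
  have hmid : |Y α - Y β| < |X α - X β| := by
    rw [hα, hβ]
    simp only [abs_eq_max_neg]
    omega
  linarith

end Spread

section Levelled
variable {n : ℕ} {A B D : Fin n → ℕ}

theorem two_mul_spread (D : Fin n → ℕ) :
    2 * spread D = ∑ r, ∑ s, |(D r : ℤ) - D s| := by
  have hsplit : ∀ r s : Fin n, |(D r : ℤ) - D s| =
      (if r < s then |(D r : ℤ) - D s| else 0) + (if s < r then |(D s : ℤ) - D r| else 0) := by
    intro r s
    rcases lt_trichotomy r s with h | rfl | h
    · simp [h, h.not_gt]
    · simp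
    · simp [h, h.not_gt, abs_sub_comm]
  rw [Finset.sum_congr rfl fun r _ => Finset.sum_congr rfl fun s _ => hsplit r s]
  simp only [Finset.sum_add_distrib]
  rw [Finset.sum_comm (f := fun r s => if s < r then |(D s : ℤ) - D r| else 0), spread]
  ring

theorem lvl_apply_left (D : Fin n → ℕ) (α β : Fin n) : lvl D α β α = D α - 1 := if_pos rfl

theorem lvl_apply_right (D : Fin n → ℕ) {α β : Fin n} (h : α ≠ β) : lvl D α β β = D β + 1 := by
  simp [lvl, h.symm]

theorem lvl_apply_of_ne (D : Fin n → ℕ) {α β i : Fin n} (hα : i ≠ α) (hβ : i ≠ β) :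
    lvl D α β i = D i := by
  simp [lvl, hα, hβ]

theorem spread_lvl_lt {α β : Fin n} (h : α ≠ β) (hgap : D β + 2 ≤ D α) :
    spread (lvl D α β) < spread D := by
  suffices 2 * spread (lvl D α β) < 2 * spread D by omega
  rw [two_mul_spread, two_mul_spread]
  refine sum_sum_abs_sub_lt h ?_ ?_ (fun s hs => ?_) (by omega)
  · rw [lvl_apply_left]; omega
  · rw [lvl_apply_right D h]; push_cast; rfl
  · simp only [Finset.mem_compl, Finset.mem_insert, Finset.mem_singleton, not_or] at hs
    rw [lvl_apply_of_ne D hs.1 hs.2]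

theorem lvl_eq_comp_swap {α β : Fin n} (h : D α = D β + 1) :
    lvl D α β = D ∘ Equiv.swap α β := by
  funext i
  rcases eq_or_ne i α with rfl | hα
  · simp [lvl, h]
  rcases eq_or_ne i β with rfl | hβ
  · simp [lvl, hα, h]
  · simp [lvl, hα, hβ, Equiv.swap_apply_of_ne_of_ne hα hβ]

theorem spread_lvl_of_eq_add_one {α β : Fin n} (h : D α = D β + 1) :
    spread (lvl D α β) = spread D := by
  suffices 2 * spread (lvl D α β) = 2 * spread D by omega
  rw [two_mul_spread, two_mul_spread, lvl_eq_comp_swap h]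
  exact sum_sum_abs_sub_comp_perm (fun i => (D i : ℤ)) _

theorem between_lvl_iff (hD : Between A D B) {α β : Fin n} (h : α ≠ β) (hpos : 0 < D α) :
    Between A (lvl D α β) B ↔ A α < D α ∧ D β < B β := by
  constructor
  · intro hl
    have hα := hl α
    have hβ := hl β
    rw [lvl_apply_left] at hα
    rw [lvl_apply_right D h] at hβ
    omega
  · rintro ⟨hα, hβ⟩ i
    rcases eq_or_ne i α with rfl | hiα
    · rw [lvl_apply_left]; have := hD i; omega
    rcases eq_or_ne i β with rfl | hiβ
    · rw [lvl_apply_right D h]; have := hD i; omega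
    · rw [lvl_apply_of_ne D hiα hiβ]; exact hD i

theorem isLevelled_iff :
    IsLevelled A B D ↔ Between A D B ∧ ∀ i j, A i < D i → D j < B j → D i ≤ D j + 1 := by
  refine and_congr_right fun hD => ⟨fun hlev i j hi hj => ?_, fun hgap α β h hlt hl => ?_⟩
  · by_contra! hgap
    have hij : i ≠ j := by rintro rfl; omega
    have := hlev i j hij (by omega) ((between_lvl_iff hD hij (by omega)).2 ⟨hi, hj⟩)
    have := spread_lvl_lt (D := D) hij hgap
    omega
  · obtain ⟨hα, hβ⟩ := (between_lvl_iff hD h (by omega)).1 hl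
    rw [spread_lvl_of_eq_add_one (by have := hgap α β hα hβ; omega)]

end Levelled

section Fill
variable {n : ℕ} (A B : Fin n → ℕ)

def fill (k : ℤ) (i : Fin n) : ℤ := max (A i : ℤ) (min k (B i))

def FillBetween (lo hi : ℤ) (D : Fin n → ℕ) : Prop :=
  ∀ i, fill A B lo i ≤ D i ∧ (D i : ℤ) ≤ fill A B hi i

variable {A B}

theorem fill_mono (i : Fin n) : Monotone (fill A B · i) :=
  fun _ _ h => max_le_max le_rfl (min_le_min_right _ h)

theorem fillBetween_iff (hab : ∀ i, A i ≤ B i) {lo hi : ℤ} {D : Fin n → ℕ} :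
    FillBetween A B lo hi D ↔
      ∀ i, A i ≤ D i ∧ D i ≤ B i ∧ (D i < B i → lo ≤ D i) ∧ (A i < D i → (D i : ℤ) ≤ hi) := by
  refine forall_congr' fun i => ?_
  have := hab i
  unfold fill
  omega

end Fill

section Volume
variable {n : ℕ} {A B D : Fin n → ℕ}

theorem vol_cast (hAD : ∀ i, A i ≤ D i) : (vol A D : ℝ) = ∑ i, ((D i : ℝ) - A i) := by
  rw [vol, Nat.cast_sum]
  exact Finset.sum_congr rfl fun i _ => Nat.cast_sub (hAD i)

theorem Fvol_intCast (hab : ∀ i, A i ≤ B i) (k : ℤ) :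
    Fvol A B k = ∑ i, ((fill A B k i : ℝ) - A i) := by
  refine Finset.sum_congr rfl fun i _ => ?_
  have hAB : (A i : ℝ) ≤ B i := by exact_mod_cast hab i
  have hmin : min (k : ℝ) (B i) - min (k : ℝ) (A i) = max (A i : ℝ) (min (k : ℝ) (B i)) - A i := by
    simp only [min_def, max_def]
    split_ifs <;> linarith
  rw [hmin, fill]
  push_cast
  rfl

theorem vol_sub_Fvol_intCast (hab : ∀ i, A i ≤ B i) (hAD : ∀ i, A i ≤ D i) (k : ℤ) :
    (vol A D : ℝ) - Fvol A B k = ((∑ i, ((D i : ℤ) - fill A B k i) : ℤ) : ℝ) := by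
  rw [vol_cast hAD, Fvol_intCast hab, ← Finset.sum_sub_distrib]
  push_cast
  exact Finset.sum_congr rfl fun i _ => by ring

theorem Fvol_monotone (hab : ∀ i, A i ≤ B i) : Monotone (Fvol A B) := fun x y hxy =>
  Finset.sum_le_sum fun i _ => by
    have : (A i : ℝ) ≤ B i := by exact_mod_cast hab i
    simp only [min_def]
    split_ifs <;> linarith

theorem continuous_Fvol : Continuous (Fvol A B) := by
  unfold Fvol; fun_prop

theorem Fvol_of_nonpos {x : ℝ} (hx : x ≤ 0) : Fvol A B x = 0 :=
  Finset.sum_eq_zero fun i _ => by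
    rw [min_eq_left (hx.trans (Nat.cast_nonneg _)), min_eq_left (hx.trans (Nat.cast_nonneg _)),
      sub_self]

theorem Fvol_of_le (hab : ∀ i, A i ≤ B i) {x : ℝ} (hx : ∀ i, (B i : ℝ) ≤ x) :
    Fvol A B x = (∑ i, (B i - A i) : ℕ) := by
  rw [Fvol, Nat.cast_sum]
  refine Finset.sum_congr rfl fun i _ => ?_
  rw [min_eq_right (hx i), min_eq_right ((Nat.cast_le.2 (hab i)).trans (hx i)),
    Nat.cast_sub (hab i)]

theorem Fvol_sInf_eq (hab : ∀ i, A i ≤ B i) {L : ℕ} (hL : L ≤ ∑ i, (B i - A i)) :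
    Fvol A B (sInf {x | Fvol A B x = L}) = L := by
  set S := {x | Fvol A B x = (L : ℝ)}
  have hS : S.Nonempty := by
    have hM : ∀ i, (B i : ℝ) ≤ (univ.sup B : ℕ) := fun i => by
      exact_mod_cast Finset.le_sup (Finset.mem_univ i)
    obtain ⟨x, -, hx⟩ := intermediate_value_Icc (Nat.cast_nonneg _)
      continuous_Fvol.continuousOn ⟨(Fvol_of_nonpos le_rfl).trans_le (Nat.cast_nonneg L),
        (Fvol_of_le hab hM).symm ▸ (Nat.cast_le.2 hL)⟩
    exact ⟨x, hx⟩
  -- for `L = 0` the set is unbounded below and `sInf` takes the junk value `0`, where `F` vanishes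
  by_cases hbdd : BddBelow S
  · exact (isClosed_eq continuous_Fvol continuous_const).csInf_mem hS hbdd
  · obtain ⟨x, hx, hx0⟩ := not_bddBelow_iff.1 hbdd 0
    rw [Real.sInf_of_not_bddBelow hbdd, ← (hx : Fvol A B x = L), Fvol_of_nonpos hx0.le,
      Fvol_of_nonpos le_rfl]

end Volume

section Levels
variable {n : ℕ} {A B D : Fin n → ℕ}

theorem isLevelled_iff_exists_fillBetween (hab : ∀ i, A i ≤ B i) :
    IsLevelled A B D ↔ ∃ t : ℤ, FillBetween A B t (t + 1) D := by
  simp only [isLevelled_iff, fillBetween_iff hab]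
  constructor
  · rintro ⟨hD, hgap⟩
    obtain ⟨t, hraise, hlower⟩ : ∃ t : ℤ,
        (∀ j, D j < B j → t ≤ D j) ∧ ∀ i, A i < D i → (D i : ℤ) ≤ t + 1 := by
      by_cases hR : (univ.filter fun j => D j < B j).Nonempty
      · obtain ⟨j, hj, hmin⟩ := Finset.exists_min_image _ D hR
        simp only [Finset.mem_filter_univ] at hj hmin
        exact ⟨D j, fun j' hj' => by exact_mod_cast hmin j' hj',
          fun i hi => by have := hgap i j hi hj; omega⟩
      · refine ⟨(univ.sup D : ℕ), fun j hj => absurd ⟨j, by simpa using hj⟩ hR, fun i _ => ?_⟩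
        have := Finset.le_sup (f := D) (Finset.mem_univ i)
        omega
    exact ⟨t, fun i => ⟨(hD i).1, (hD i).2, hraise i, hlower i⟩⟩
  · rintro ⟨t, h⟩
    refine ⟨fun i => ⟨(h i).1, (h i).2.1⟩, fun i j hi hj => ?_⟩
    have := (h i).2.2.2 hi
    have := (h j).2.2.1 hj
    omega

theorem FillBetween.mono {lo hi lo' hi' : ℤ} (h : FillBetween A B lo hi D) (hlo : lo' ≤ lo)
    (hhi : hi ≤ hi') : FillBetween A B lo' hi' D := fun i =>
  ⟨(fill_mono i hlo).trans (h i).1, (h i).2.trans (fill_mono i hhi)⟩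

theorem FillBetween.lower_le {lo hi : ℤ} (h : FillBetween A B lo hi D) (i : Fin n) :
    A i ≤ D i := by
  exact_mod_cast (le_max_left _ _).trans (h i).1

theorem eq_fill_of_le_fill (hab : ∀ i, A i ≤ B i) (hAD : ∀ i, A i ≤ D i) {k : ℤ}
    (hD : ∀ i, (D i : ℤ) ≤ fill A B k i) (hvol : Fvol A B k ≤ vol A D) (i : Fin n) :
    (D i : ℤ) = fill A B k i := by
  have hsum : 0 ≤ ∑ i, ((D i : ℤ) - fill A B k i) := by
    have := vol_sub_Fvol_intCast hab hAD k
    exact_mod_cast this ▸ sub_nonneg.2 hvol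
  have := (Finset.sum_eq_zero_iff_of_nonpos fun i _ => sub_nonpos.2 (hD i)).1
    (le_antisymm (Finset.sum_nonpos fun i _ => sub_nonpos.2 (hD i)) hsum) i (Finset.mem_univ i)
  omega

theorem eq_fill_of_fill_le (hab : ∀ i, A i ≤ B i) {k : ℤ}
    (hD : ∀ i, fill A B k i ≤ D i) (hvol : vol A D ≤ Fvol A B k) (i : Fin n) :
    (D i : ℤ) = fill A B k i := by
  have hAD : ∀ i, A i ≤ D i := fun i => by exact_mod_cast (le_max_left _ _).trans (hD i)
  have hsum : ∑ i, ((D i : ℤ) - fill A B k i) ≤ 0 := by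
    have := vol_sub_Fvol_intCast hab hAD k
    exact_mod_cast this ▸ sub_nonpos.2 hvol
  have := (Finset.sum_eq_zero_iff_of_nonneg fun i _ => sub_nonneg.2 (hD i)).1
    (le_antisymm hsum (Finset.sum_nonneg fun i _ => sub_nonneg.2 (hD i))) i (Finset.mem_univ i)
  omega

theorem FillBetween.of_Fvol_le_vol_le (hab : ∀ i, A i ≤ B i) {t lo hi : ℤ}
    (h : FillBetween A B t (t + 1) D) (hlo : Fvol A B lo ≤ vol A D)
    (hhi : vol A D ≤ Fvol A B hi) : FillBetween A B lo hi D := by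
  refine fun i => ⟨?_, ?_⟩
  · rcases le_or_gt lo t with hlt | hlt
    · exact (fill_mono i hlt).trans (h i).1
    · have hle j : (D j : ℤ) ≤ fill A B lo j := (h j).2.trans (fill_mono j (by omega))
      exact (eq_fill_of_le_fill hab h.lower_le hle hlo i).ge
  · rcases le_or_gt (t + 1) hi with hlt | hlt
    · exact (h i).2.trans (fill_mono i hlt)
    · have hle j : fill A B hi j ≤ D j := (fill_mono j (by omega)).trans (h j).1
      exact (eq_fill_of_fill_le hab hle hhi i).le

theorem vol_sub_Fvol_intCast_eq_card (hab : ∀ i, A i ≤ B i) {k : ℤ}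
    (h : FillBetween A B k (k + 1) D) :
    (vol A D : ℝ) - Fvol A B k = #{i | fill A B k i < D i} := by
  have hterm : ∀ i, (D i : ℤ) - fill A B k i = if fill A B k i < D i then 1 else 0 := fun i => by
    have := h i
    unfold fill at this ⊢
    split_ifs <;> omega
  rw [vol_sub_Fvol_intCast hab h.lower_le, Finset.sum_congr rfl fun i _ => hterm i,
    Finset.sum_boole]
  push_cast
  rfl

theorem filter_fill_lt_eq {k : ℤ} (h : FillBetween A B k (k + 1) D) {T : Finset (Fin n)}
    (hT : ∀ i ∈ T, (A i : ℤ) < k + 1 ∧ (D i : ℤ) = k + 1)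
    (hnT : ∀ i ∉ T, (A i : ℤ) < k + 1 → k < B i → (D i : ℤ) = k) :
    ({i | fill A B k i < D i} : Finset _) = T := by
  ext i
  have := h i
  rw [Finset.mem_filter_univ]
  unfold fill at this ⊢
  by_cases hiT : i ∈ T
  · have := hT i hiT
    simp only [hiT, iff_true]
    omega
  · have := hnT i hiT
    simp only [hiT, iff_false]
    omega

theorem fillBetween_floor_ceil_iff (hab : ∀ i, A i ≤ B i) (ℓ : ℝ) :
    (FillBetween A B ⌊ℓ⌋ ⌈ℓ⌉ D ∧ (vol A D : ℝ) = Fvol A B ℓ) ↔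
      ((∀ i, (B i : ℝ) ≤ ℓ → D i = B i) ∧
       (∀ i, ℓ ≤ (A i : ℝ) → D i = A i) ∧
       ∃ T : Finset (Fin n),
         (∀ i ∈ T, (A i : ℝ) < ℓ ∧ ℓ < (B i : ℝ)) ∧
         (T.card : ℝ) = Fvol A B ℓ - Fvol A B (⌊ℓ⌋ : ℝ) ∧
         (∀ i ∈ T, (D i : ℤ) = ⌈ℓ⌉) ∧
         (∀ i, (A i : ℝ) < ℓ → ℓ < (B i : ℝ) → i ∉ T → (D i : ℤ) = ⌊ℓ⌋)) := by
  have hB_le (i) : (B i : ℝ) ≤ ℓ ↔ (B i : ℤ) ≤ ⌊ℓ⌋ := by rw [Int.le_floor, Int.cast_natCast]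
  have hle_A (i) : ℓ ≤ (A i : ℝ) ↔ ⌈ℓ⌉ ≤ (A i : ℤ) := by rw [Int.ceil_le, Int.cast_natCast]
  have hA_lt (i) : (A i : ℝ) < ℓ ↔ (A i : ℤ) < ⌈ℓ⌉ := by rw [Int.lt_ceil, Int.cast_natCast]
  have hlt_B (i) : ℓ < (B i : ℝ) ↔ ⌊ℓ⌋ < (B i : ℤ) := by rw [Int.floor_lt, Int.cast_natCast]
  simp only [hB_le, hle_A, hA_lt, hlt_B]
  have hfc := Int.floor_le_ceil ℓ
  have hcf := Int.ceil_le_floor_add_one ℓ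
  set fl := ⌊ℓ⌋
  set cl := ⌈ℓ⌉
  constructor
  · rintro ⟨hF, hvol⟩
    have hF' := (fillBetween_iff hab).1 hF
    refine ⟨fun i _ => by have := hF' i; omega, fun i _ => by have := hF' i; omega,
      ({i | fill A B fl i < D i} : Finset _), fun i hiT => ?_, ?_, fun i hiT => ?_,
      fun i _ _ hiT => ?_⟩
    · have := hF i; rw [Finset.mem_filter_univ] at hiT; unfold fill at this hiT; omega
    · rw [← hvol, ← vol_sub_Fvol_intCast_eq_card hab (hF.mono le_rfl hcf)]
    · have := hF i; rw [Finset.mem_filter_univ] at hiT; unfold fill at this hiT; omega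
    · have := hF i; rw [Finset.mem_filter_univ] at hiT; unfold fill at this hiT; omega
  · rintro ⟨h1, h2, T, hT, hcard, hTD, hnT⟩
    have hF : FillBetween A B fl cl D := (fillBetween_iff hab).2 fun i => by
      have := hab i; have := h1 i; have := h2 i
      by_cases hiT : i ∈ T
      · have := hT i hiT; have := hTD i hiT; omega
      · have := hnT i; simp only [hiT, not_false_eq_true, forall_const] at this; omega
    refine ⟨hF, ?_⟩
    have hcount := vol_sub_Fvol_intCast_eq_card hab (hF.mono le_rfl hcf)
    rcases (by omega : cl = fl ∨ cl = fl + 1) with hcl | hcl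
    · have hℓ : ℓ = fl := le_antisymm (by rw [← hcl]; exact Int.le_ceil ℓ) (Int.floor_le ℓ)
      have hU : ({i | fill A B fl i < D i} : Finset _) = ∅ :=
        Finset.filter_eq_empty_iff.2 fun i _ => by have := (hF i).2; rw [hcl] at this; omega
      rw [hU, Finset.card_empty, Nat.cast_zero, sub_eq_zero] at hcount
      rw [hcount, hℓ]
    · rw [filter_fill_lt_eq (hcl ▸ hF) (fun i hi => ⟨hcl ▸ (hT i hi).1, hcl ▸ hTD i hi⟩)
        fun i hi ha hb => hnT i (hcl ▸ ha) hb hi, hcard] at hcount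
      linarith

end Levels

theorem stmt_7 {n : ℕ} (A B : Fin n → ℕ)
    (hS : ∀ i, A i ≤ B i ∧ B i ≤ n - 1)
    (L : ℕ) (hL : L ≤ ∑ i, (B i - A i))
    (ℓ : ℝ) (hℓ : ℓ = sInf {x : ℝ | Fvol A B x = L})
    (D : Fin n → ℕ) :
    (IsLevelled A B D ∧ vol A D = L) ↔
      ((∀ i, (B i : ℝ) ≤ ℓ → D i = B i) ∧
       (∀ i, ℓ ≤ (A i : ℝ) → D i = A i) ∧
       ∃ T : Finset (Fin n),
         (∀ i ∈ T, (A i : ℝ) < ℓ ∧ ℓ < (B i : ℝ)) ∧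
         (T.card : ℝ) = Fvol A B ℓ - Fvol A B (⌊ℓ⌋ : ℝ) ∧
         (∀ i ∈ T, (D i : ℤ) = ⌈ℓ⌉) ∧
         (∀ i, (A i : ℝ) < ℓ → ℓ < (B i : ℝ) → i ∉ T → (D i : ℤ) = ⌊ℓ⌋)) := by
  have hab : ∀ i, A i ≤ B i := fun i => (hS i).1
  have hFℓ : Fvol A B ℓ = L := hℓ ▸ Fvol_sInf_eq hab hL
  rw [← fillBetween_floor_ceil_iff hab, isLevelled_iff_exists_fillBetween hab, hFℓ, Nat.cast_inj]
  constructor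
  · rintro ⟨⟨t, ht⟩, hvol⟩
    have hmono := Fvol_monotone hab
    refine ⟨ht.of_Fvol_le_vol_le hab ?_ ?_, hvol⟩
    · rw [hvol, ← hFℓ]; exact hmono (Int.floor_le ℓ)
    · rw [hvol, ← hFℓ]; exact hmono (Int.le_ceil ℓ)
  · rintro ⟨h, hvol⟩
    exact ⟨⟨⌊ℓ⌋, h.mono le_rfl (Int.ceil_le_floor_add_one ℓ)⟩, hvol⟩
end
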